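/- Let δ > 0, E_c > 0, let n ≥ 1 be an integer, and set ξ = √(1 + 2E_c/δ). Then for every real x ≥ 2E_c + δ, |T_n((x − δ)/E_c − 1)| ≤ ((2x − 2δ)/E_c − 2)^n · e^{−2n/ξ} · T_n(1 + δ/E_c). -/

import Mathlib

/-!
Put `y = (x - δ)/E_c - 1 = cosh β`. Then `T_n(y) = cosh(nβ) ≤ (2 cosh β)^n / 2 = (2y)^n / 2`, since
`e^{nβ} + e^{-nβ} ≤ (e^β + e^{-β})^n`. On the other side `1 + δ/E_c = cosh(2 artanh(1/ξ))`, so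
`2 T_n(1 + δ/E_c) ≥ exp(2n artanh(1/ξ)) ≥ exp(2n/ξ)` because `artanh z ≥ z` for `0 ≤ z < 1`.
-/

open Real Polynomial.Chebyshev

namespace Real

theorem self_le_artanh {x : ℝ} (hx₀ : 0 ≤ x) (hx₁ : x < 1) : x ≤ artanh x := by
  have hlog : 2 * x ≤ log (1 + x) - log (1 - x) := by
    simpa using le_hasSum (hasSum_log_sub_log_of_abs_lt_one (abs_lt.mpr ⟨by linarith, hx₁⟩)) 0
      fun k _ => mul_nonneg (by positivity) (pow_nonneg hx₀ _)
  rw [artanh_eq_half_log ⟨by linarith, hx₁.le⟩, log_div (by linarith) (by linarith)]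
  linarith

theorem cosh_two_mul_artanh {x : ℝ} (hx : x ∈ Set.Ioo (-1) 1) :
    cosh (2 * artanh x) = (1 + x ^ 2) / (1 - x ^ 2) := by
  have h : 0 ≤ 1 - x ^ 2 := by nlinarith [hx.1, hx.2]
  rw [cosh_two_mul, cosh_artanh hx, sinh_artanh hx, div_pow, div_pow, sq_sqrt h]
  ring

theorem cosh_nat_mul_le_two_mul_cosh_pow (x : ℝ) {n : ℕ} (hn : n ≠ 0) :
    cosh (n * x) ≤ (2 * cosh x) ^ n / 2 := by
  have h := pow_add_pow_le (exp_nonneg x) (exp_nonneg (-x)) hn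
  rw [← exp_nat_mul, ← exp_nat_mul, mul_neg] at h
  rw [cosh_eq, cosh_eq, mul_div_cancel₀ _ two_ne_zero]
  gcongr

end Real

namespace Polynomial.Chebyshev

theorem abs_T_real_le {y : ℝ} (hy : 1 ≤ y) {n : ℕ} (hn : n ≠ 0) :
    |(T ℝ n).eval y| ≤ (2 * y) ^ n / 2 := by
  rw [← cosh_arcosh hy, T_real_cosh, abs_of_pos (cosh_pos _), Int.cast_natCast]
  exact cosh_nat_mul_le_two_mul_cosh_pow _ hn

theorem exp_mul_le_two_mul_T_real_cosh (θ : ℝ) (n : ℤ) :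
    exp (n * θ) ≤ 2 * (T ℝ n).eval (cosh θ) := by
  rw [T_real_cosh, cosh_eq]
  linarith [exp_nonneg (-(n * θ))]

end Polynomial.Chebyshev

theorem chebyshev_growth_bound (δ Ec : ℝ) (hδ : 0 < δ) (hEc : 0 < Ec)
    (n : ℕ) (hn : 1 ≤ n) (x : ℝ) (hx : 2 * Ec + δ ≤ x) :
    |(Polynomial.Chebyshev.T ℝ n).eval ((x - δ) / Ec - 1)| ≤
      ((2 * x - 2 * δ) / Ec - 2) ^ n *
        Real.exp (-(2 * n) / Real.sqrt (1 + 2 * Ec / δ)) *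
        (Polynomial.Chebyshev.T ℝ n).eval (1 + δ / Ec) := by
  set ξ := √(1 + 2 * Ec / δ)
  have hξsq : ξ ^ 2 = 1 + 2 * Ec / δ := sq_sqrt (by positivity)
  have hξ : 1 < ξ := by
    rw [lt_sqrt zero_le_one, one_pow, lt_add_iff_pos_right]
    positivity
  have hz : ξ⁻¹ ∈ Set.Ioo (-1) 1 :=
    ⟨neg_one_lt_zero.trans (inv_pos.2 (zero_lt_one.trans hξ)), inv_lt_one_of_one_lt₀ hξ⟩
  have hy : 1 ≤ (x - δ) / Ec - 1 := by
    rw [le_sub_iff_add_le, le_div_iff₀ hEc]; linarith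
  have ha : 1 + δ / Ec = cosh (2 * artanh ξ⁻¹) := by
    rw [cosh_two_mul_artanh hz, inv_pow, hξsq]
    field_simp
    ring
  have hlower : exp (n * (2 * ξ⁻¹)) ≤ 2 * (T ℝ n).eval (1 + δ / Ec) := by
    rw [ha]
    refine (exp_le_exp.2 ?_).trans (by exact_mod_cast exp_mul_le_two_mul_T_real_cosh _ n)
    gcongr
    exact self_le_artanh (by positivity) hz.2
  rw [show (2 * x - 2 * δ) / Ec - 2 = 2 * ((x - δ) / Ec - 1) by ring]
  calc _ ≤ (2 * ((x - δ) / Ec - 1)) ^ n / 2 := abs_T_real_le hy (by omega)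
    _ = (2 * ((x - δ) / Ec - 1)) ^ n * exp (-(2 * n) / ξ) * (exp (n * (2 * ξ⁻¹)) / 2) := by
      rw [mul_assoc, mul_div_assoc', ← exp_add, show -(2 * n) / ξ + n * (2 * ξ⁻¹) = 0 by ring,
        exp_zero, one_div, div_eq_mul_inv]
    _ ≤ _ := by gcongr; linarith
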